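/- Suppose δ_i > 0 and β_ij ≥ 0 for all i,j, and B is symmetric and irreducible. Let π = {N_1,...,N_r} be any partition of the node set {1,...,N}, and define d_min,pl = min_{i∈N_p} Σ_{k∈N_l} β_ik, d_max,pl = max_{i∈N_p} Σ_{k∈N_l} β_ik, δ_min,l = min_{i∈N_l} δ_i and δ_max,l = max_{i∈N_l} δ_i, with r×r matrices B_min = (d_min,pl) and B_max = (d_max,pl). Let v_lb, v_ub : [0,∞) → ℝ^r solve d v_lb(t)/dt = -diag(δ_max,1,...,δ_max,r) v_lb(t) + diag(u_r - v_lb(t)) B_min v_lb(t) and d v_ub(t)/dt = -diag(δ_min,1,...,δ_min,r) v_ub(t) + diag(u_r - v_ub(t)) B_max v_ub(t), with initial conditions v_lb,l(0), v_ub,l(0) ∈ [0,1], and let v : [0,∞) → ℝ^N solve NIMFA with v(0) ∈ [0,1]^N. If v_lb,l(0) ≤ v_i(0) ≤ v_ub,l(0) for all nodes i in every cell N_l, then v_lb,l(t) ≤ v_i(t) ≤ v_ub,l(t) for all t ≥ 0, all cells N_l and all nodes i ∈ N_l. -/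

import Mathlib

open Matrix Finset

/-- A nonnegative square matrix is irreducible if its associated directed graph
(with an edge from `i` to `j` whenever the entry is positive) is strongly connected. -/
def MatIrreducible {N : ℕ} (B : Matrix (Fin N) (Fin N) ℝ) : Prop :=
  ∀ i j : Fin N, Relation.ReflTransGen (fun a b => 0 < B a b) i j

/-!
Where `y ≤ 1`, the NIMFA vector field `f(x)_i = -δ_i x_i + (1 - x_i) (B x)_i` is cooperative:
if `i` maximizes `x_j - y_j ≥ 0`, then `f(x)_i - f(y)_i ≤ K (x_i - y_i)`, with `K` depending only on
`B` and on a lower bound for `x` and `y`. Hence a subsolution starting below a supersolution stays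
below it, by Gronwall's inequality for the maximum of the components of `x - y`. The constants
`0` and `1` are a solution and a supersolution, so `[0, 1]ⁿ` is invariant. Lifted to the nodes
through the partition, the lower-bound system is a subsolution of NIMFA and the upper-bound system
a supersolution, because the extremal cell degrees and curing rates bound the actual ones.
-/

open Filter Topology

theorem eventually_slope_sup'_lt {ι : Type*} [Fintype ι] [Nonempty ι] {g : ι → ℝ → ℝ}
    {g' : ι → ℝ} {x R : ℝ} (hd : ∀ j, HasDerivAt (g j) (g' j) x)
    (hR : ∀ j, g j x = univ.sup' univ_nonempty (g · x) → g' j < R) :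
    ∀ᶠ z in 𝓝[>] x, slope (fun y => univ.sup' univ_nonempty (g · y)) x z < R := by
  have hg : ∀ j, ∀ᶠ z in 𝓝[>] x, g j z < univ.sup' univ_nonempty (g · x) + R * (z - x) := by
    intro j
    rcases (le_sup' (g · x) (mem_univ j)).eq_or_lt with hj | hj
    · filter_upwards [(hd j).hasDerivWithinAt.limsup_slope_le' (lt_irrefl x) (hR j hj),
        self_mem_nhdsWithin] with z hz (hxz : x < z)
      rw [slope_def_field, div_lt_iff₀ (sub_pos.2 hxz)] at hz
      linarith
    · refine nhdsWithin_le_nhds ((hd j).continuousAt.eventually_lt (by fun_prop) ?_)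
      rwa [sub_self, mul_zero, add_zero]
  filter_upwards [eventually_all.2 hg, self_mem_nhdsWithin] with z hz (hxz : x < z)
  rw [slope_def_field, div_lt_iff₀ (sub_pos.2 hxz), sub_lt_iff_lt_add']
  exact (sup'_lt_iff _).2 fun j _ => hz j

theorem nonpos_of_deriv_le_mul_at_max {ι : Type*} [Fintype ι] {g g' : ι → ℝ → ℝ} {K T : ℝ}
    (hd : ∀ j, ∀ x ∈ Set.Icc 0 T, HasDerivAt (g j) (g' j x) x)
    (hmax : ∀ x ∈ Set.Ico 0 T, ∀ j, 0 ≤ g j x → (∀ k, g k x ≤ g j x) → g' j x ≤ K * g j x)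
    (h0 : ∀ j, g j 0 ≤ 0) :
    ∀ x ∈ Set.Icc 0 T, ∀ j, g j x ≤ 0 := by
  -- Adjoining the zero function makes the maximum `F` nonnegative, so that `F' ≤ K F`.
  let G : Option ι → ℝ → ℝ := fun o => o.elim (fun _ => 0) g
  let G' : Option ι → ℝ → ℝ := fun o => o.elim (fun _ => 0) g'
  let F : ℝ → ℝ := fun x => univ.sup' univ_nonempty (G · x)
  have hGd : ∀ o, ∀ x ∈ Set.Icc 0 T, HasDerivAt (G o) (G' o x) x := by
    rintro (_ | j) x hx
    exacts [hasDerivAt_const x 0, hd j x hx]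
  have hGF : ∀ o x, G o x ≤ F x := fun o x => le_sup' (G · x) (mem_univ o)
  have hF : ∀ x ∈ Set.Icc 0 T, F x ≤ 0 := by
    have := le_gronwallBound_of_liminf_deriv_right_le (f := F) (f' := fun x => K * F x) (K := K)
      (δ := 0) (ε := 0) (ContinuousOn.finset_sup'_apply _ fun o _ x hx =>
        (hGd o x hx).continuousAt.continuousWithinAt) ?_ (sup'_le _ _ ?_)
      fun _ _ => (add_zero _).ge
    · simpa [gronwallBound_ε0_δ0] using this
    · intro x hx R hR
      refine (eventually_slope_sup'_lt (fun o => hGd o x (Set.Ico_subset_Icc_self hx))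
        ?_).frequently
      rintro (_ | j) hj
      · change 0 < R
        change 0 = F x at hj
        simpa [← hj] using hR
      · change g j x = F x at hj
        change g' j x < R
        refine (hmax x hx j (hj ▸ hGF none x) fun k => hj ▸ hGF (some k) x).trans_lt ?_
        rwa [hj]
    · rintro (_ | j) -
      exacts [le_rfl, h0 j]
  exact fun x hx j => (hGF (some j) x).trans (hF x hx)

theorem exists_abs_le_of_continuousOn {ι : Type*} [Fintype ι] {x : ℝ → ι → ℝ} {s : Set ℝ}
    (hs : IsCompact s) (hx : ∀ i, ContinuousOn (fun t => x t i) s) :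
    ∃ C, ∀ t ∈ s, ∀ i, |x t i| ≤ C := by
  obtain ⟨C, hC⟩ := hs.exists_bound_of_continuousOn (continuousOn_pi.2 hx)
  exact ⟨C, fun t ht i => (norm_le_pi_norm (x t) i).trans (hC t ht)⟩

section Nimfa

variable {ι κ : Type*} [Fintype ι] [Fintype κ]

def nimfaField (δ : ι → ℝ) (B : Matrix ι ι ℝ) (x : ι → ℝ) (i : ι) : ℝ :=
  -δ i * x i + (1 - x i) * ∑ j, B i j * x j

theorem nimfaField_sub_le {δ : ι → ℝ} {B : Matrix ι ι ℝ} {a b : ι → ℝ} {i : ι} {C : ℝ}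
    (hδ : 0 ≤ δ i) (hB : ∀ j, 0 ≤ B i j) (hmax : ∀ j, a j - b j ≤ a i - b i)
    (hm : 0 ≤ a i - b i) (hb : b i ≤ 1) (hbC : -C ≤ b i) (haC : ∀ j, -C ≤ a j) :
    nimfaField δ B a i - nimfaField δ B b i ≤ (1 + 2 * C) * (∑ j, B i j) * (a i - b i) := by
  have hR : 0 ≤ ∑ j, B i j := sum_nonneg fun j _ => hB j
  have hdiff : ∑ j, B i j * a j - ∑ j, B i j * b j ≤ (∑ j, B i j) * (a i - b i) := by
    rw [← sum_sub_distrib, sum_mul]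
    gcongr with j
    rw [← mul_sub]
    exact mul_le_mul_of_nonneg_left (hmax j) (hB j)
  have hSa : (∑ j, B i j) * -C ≤ ∑ j, B i j * a j := by
    rw [sum_mul]
    gcongr with j
    exacts [hB j, haC j]
  -- `f(a)_i - f(b)_i = -δ_i m + (1 - b_i) (∑ B_ij (a_j - b_j)) - m (B a)_i` with `m = a_i - b_i`.
  unfold nimfaField
  nlinarith [mul_le_mul_of_nonneg_left hdiff (sub_nonneg.2 hb),
    mul_le_mul_of_nonneg_right (by linarith : 1 - b i ≤ 1 + C) (mul_nonneg hR hm),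
    mul_le_mul_of_nonneg_left hSa hm, mul_nonneg hδ hm]

theorem nimfa_comparison {δ : ι → ℝ} {B : Matrix ι ι ℝ} (hδ : ∀ i, 0 ≤ δ i)
    (hB : ∀ i j, 0 ≤ B i j) {x y x' y' : ℝ → ι → ℝ}
    (hx : ∀ t, 0 ≤ t → ∀ i, HasDerivAt (fun s => x s i) (x' t i) t)
    (hy : ∀ t, 0 ≤ t → ∀ i, HasDerivAt (fun s => y s i) (y' t i) t)
    (hsub : ∀ t, 0 ≤ t → ∀ i, x' t i ≤ nimfaField δ B (x t) i)
    (hsuper : ∀ t, 0 ≤ t → ∀ i, nimfaField δ B (y t) i ≤ y' t i)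
    (hy1 : ∀ t, 0 ≤ t → ∀ i, y t i ≤ 1) (h0 : ∀ i, x 0 i ≤ y 0 i) :
    ∀ t, 0 ≤ t → ∀ i, x t i ≤ y t i := by
  intro T hT
  obtain ⟨Cx, hCx⟩ := exists_abs_le_of_continuousOn (x := x) (isCompact_Icc (a := 0) (b := T))
    fun i t ht => (hx t ht.1 i).continuousAt.continuousWithinAt
  obtain ⟨Cy, hCy⟩ := exists_abs_le_of_continuousOn (x := y) (isCompact_Icc (a := 0) (b := T))
    fun i t ht => (hy t ht.1 i).continuousAt.continuousWithinAt
  set C := max Cx Cy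
  have key := nonpos_of_deriv_le_mul_at_max (g := fun i t => x t i - y t i)
    (g' := fun i t => x' t i - y' t i) (K := (1 + 2 * C) * ∑ i, ∑ j, B i j) (T := T)
    (fun i t ht => (hx t ht.1 i).sub (hy t ht.1 i)) ?_ fun i => sub_nonpos.2 (h0 i)
  · exact fun i => sub_nonpos.1 (key T ⟨hT, le_rfl⟩ i)
  intro t ht i hm hmax
  have ht' : t ∈ Set.Icc 0 T := Set.Ico_subset_Icc_self ht
  have hxC : ∀ j, -C ≤ x t j := fun j => (neg_le_of_abs_le (hCx t ht' j)).trans' (by simp [C])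
  have hyC : -C ≤ y t i := (neg_le_of_abs_le (hCy t ht' i)).trans' (by simp [C])
  have hC : 0 ≤ 1 + 2 * C := by
    linarith [(abs_nonneg (x t i)).trans (hCx t ht' i), le_max_left Cx Cy]
  have hrow : ∑ j, B i j ≤ ∑ i, ∑ j, B i j :=
    single_le_sum (f := fun i => ∑ j, B i j) (fun i _ => sum_nonneg fun j _ => hB i j) (mem_univ i)
  calc x' t i - y' t i ≤ nimfaField δ B (x t) i - nimfaField δ B (y t) i :=
        sub_le_sub (hsub t ht.1 i) (hsuper t ht.1 i)
    _ ≤ (1 + 2 * C) * (∑ j, B i j) * (x t i - y t i) :=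
        nimfaField_sub_le (hδ i) (hB i) hmax hm (hy1 t ht.1 i) hyC hxC
    _ ≤ (1 + 2 * C) * (∑ i, ∑ j, B i j) * (x t i - y t i) :=
        mul_le_mul_of_nonneg_right (mul_le_mul_of_nonneg_left hrow hC) hm

theorem nimfa_mem_Icc {δ : ι → ℝ} {B : Matrix ι ι ℝ} (hδ : ∀ i, 0 ≤ δ i)
    (hB : ∀ i j, 0 ≤ B i j) {u : ℝ → ι → ℝ}
    (hu : ∀ t, 0 ≤ t → ∀ i, HasDerivAt (fun s => u s i) (nimfaField δ B (u t) i) t)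
    (hu0 : ∀ i, u 0 i ∈ Set.Icc 0 1) :
    ∀ t, 0 ≤ t → ∀ i, u t i ∈ Set.Icc 0 1 := by
  have hle_one : ∀ t, 0 ≤ t → ∀ i, u t i ≤ 1 :=
    nimfa_comparison (y := fun _ _ => 1) (y' := fun _ _ => 0) hδ hB hu
      (fun t _ _ => hasDerivAt_const t 1) (fun _ _ _ => le_rfl)
      (fun _ _ i => by simp [nimfaField, hδ i]) (fun _ _ _ => le_rfl) fun i => (hu0 i).2
  have hnonneg : ∀ t, 0 ≤ t → ∀ i, 0 ≤ u t i :=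
    nimfa_comparison (x := fun _ _ => 0) (x' := fun _ _ => 0) hδ hB
      (fun t _ _ => hasDerivAt_const t 0) hu (fun _ _ i => by simp [nimfaField])
      (fun _ _ _ => le_rfl) hle_one fun i => (hu0 i).1
  exact fun t ht i => ⟨hnonneg t ht i, hle_one t ht i⟩

variable [DecidableEq κ]

theorem nimfaField_comp (δ : ι → ℝ) (B : Matrix ι ι ℝ) (c : ι → κ) (w : κ → ℝ) (i : ι) :
    nimfaField δ B (w ∘ c) i = -δ i * w (c i)
      + (1 - w (c i)) * ∑ l, (∑ k ∈ univ.filter (fun k => c k = l), B i k) * w l := by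
  simp only [nimfaField, Function.comp_apply]
  rw [← sum_fiberwise univ c fun k => B i k * w (c k)]
  congr 2
  refine sum_congr rfl fun l _ => ?_
  rw [sum_mul]
  exact sum_congr rfl fun k hk => by rw [(mem_filter.1 hk).2]

variable {δ : ι → ℝ} {B : Matrix ι ι ℝ} {δ' : κ → ℝ} {B' : Matrix κ κ ℝ} {c : ι → κ} {w : κ → ℝ}
  {i : ι}

theorem nimfaField_le_nimfaField_comp (hw : ∀ l, 0 ≤ w l) (hw1 : w (c i) ≤ 1)
    (hδ : δ i ≤ δ' (c i)) (hB' : ∀ l, B' (c i) l ≤ ∑ k ∈ univ.filter (fun k => c k = l), B i k) :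
    nimfaField δ' B' w (c i) ≤ nimfaField δ B (w ∘ c) i := by
  rw [nimfaField_comp]
  unfold nimfaField
  gcongr with l
  exacts [hw _, hw l, hB' l]

theorem nimfaField_comp_le_nimfaField (hw : ∀ l, 0 ≤ w l) (hw1 : w (c i) ≤ 1)
    (hδ : δ' (c i) ≤ δ i) (hB' : ∀ l, ∑ k ∈ univ.filter (fun k => c k = l), B i k ≤ B' (c i) l) :
    nimfaField δ B (w ∘ c) i ≤ nimfaField δ' B' w (c i) := by
  rw [nimfaField_comp]
  unfold nimfaField
  gcongr with l
  exacts [hw _, hw l, hB' l]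

theorem nimfa_comp_le_nimfa {v : ℝ → ι → ℝ} {u : ℝ → κ → ℝ} (hδ : ∀ i, 0 ≤ δ i)
    (hB : ∀ i j, 0 ≤ B i j) (hδ' : ∀ i, δ i ≤ δ' (c i))
    (hB' : ∀ i l, B' (c i) l ≤ ∑ k ∈ univ.filter (fun k => c k = l), B i k)
    (hv : ∀ t, 0 ≤ t → ∀ i, HasDerivAt (fun s => v s i) (nimfaField δ B (v t) i) t)
    (hu : ∀ t, 0 ≤ t → ∀ l, HasDerivAt (fun s => u s l) (nimfaField δ' B' (u t) l) t)
    (hv1 : ∀ t, 0 ≤ t → ∀ i, v t i ≤ 1) (hu01 : ∀ t, 0 ≤ t → ∀ l, u t l ∈ Set.Icc 0 1)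
    (h0 : ∀ i, u 0 (c i) ≤ v 0 i) :
    ∀ t, 0 ≤ t → ∀ i, u t (c i) ≤ v t i :=
  nimfa_comparison (x := fun t i => u t (c i)) hδ hB (fun t ht i => hu t ht (c i)) hv
    (fun t ht i => nimfaField_le_nimfaField_comp (fun l => (hu01 t ht l).1) (hu01 t ht (c i)).2
      (hδ' i) (hB' i)) (fun _ _ _ => le_rfl) hv1 h0

theorem nimfa_le_nimfa_comp {v : ℝ → ι → ℝ} {u : ℝ → κ → ℝ} (hδ : ∀ i, 0 ≤ δ i)
    (hB : ∀ i j, 0 ≤ B i j) (hδ' : ∀ i, δ' (c i) ≤ δ i)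
    (hB' : ∀ i l, ∑ k ∈ univ.filter (fun k => c k = l), B i k ≤ B' (c i) l)
    (hv : ∀ t, 0 ≤ t → ∀ i, HasDerivAt (fun s => v s i) (nimfaField δ B (v t) i) t)
    (hu : ∀ t, 0 ≤ t → ∀ l, HasDerivAt (fun s => u s l) (nimfaField δ' B' (u t) l) t)
    (hu01 : ∀ t, 0 ≤ t → ∀ l, u t l ∈ Set.Icc 0 1) (h0 : ∀ i, v 0 i ≤ u 0 (c i)) :
    ∀ t, 0 ≤ t → ∀ i, v t i ≤ u t (c i) :=
  nimfa_comparison (y := fun t i => u t (c i)) hδ hB hv (fun t ht i => hu t ht (c i))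
    (fun _ _ _ => le_rfl)
    (fun t ht i => nimfaField_comp_le_nimfaField (fun l => (hu01 t ht l).1) (hu01 t ht (c i)).2
      (hδ' i) (hB' i)) (fun t ht i => (hu01 t ht (c i)).2) h0

end Nimfa

theorem nimfa_bounds_by_equitable_general
    {N r : ℕ} (B : Matrix (Fin N) (Fin N) ℝ) (δ : Fin N → ℝ)
    (hδ_pos : ∀ i, 0 < δ i)
    (hB_nonneg : ∀ i j, 0 ≤ B i j)
    (c : Fin N → Fin r)
    (dmin dmax : Fin r → Fin r → ℝ)
    (hdmin : ∀ p l, IsLeast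
      {x : ℝ | ∃ i, c i = p ∧ x = ∑ k ∈ univ.filter (fun k => c k = l), B i k} (dmin p l))
    (hdmax : ∀ p l, IsGreatest
      {x : ℝ | ∃ i, c i = p ∧ x = ∑ k ∈ univ.filter (fun k => c k = l), B i k} (dmax p l))
    (δmin δmax : Fin r → ℝ)
    (hδmin : ∀ l, IsLeast {x : ℝ | ∃ i, c i = l ∧ x = δ i} (δmin l))
    (hδmax : ∀ l, IsGreatest {x : ℝ | ∃ i, c i = l ∧ x = δ i} (δmax l))
    (vlb vub : ℝ → Fin r → ℝ)
    (hvlb : ∀ t : ℝ, 0 ≤ t → ∀ p : Fin r, HasDerivAt (fun s => vlb s p)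
      (-δmax p * vlb t p + (1 - vlb t p) * ∑ l : Fin r, dmin p l * vlb t l) t)
    (hvub : ∀ t : ℝ, 0 ≤ t → ∀ p : Fin r, HasDerivAt (fun s => vub s p)
      (-δmin p * vub t p + (1 - vub t p) * ∑ l : Fin r, dmax p l * vub t l) t)
    (hvlb0 : ∀ p, vlb 0 p ∈ Set.Icc (0 : ℝ) 1)
    (hvub0 : ∀ p, vub 0 p ∈ Set.Icc (0 : ℝ) 1)
    (v : ℝ → Fin N → ℝ)
    (hsol : ∀ t : ℝ, 0 ≤ t → ∀ i, HasDerivAt (fun s => v s i)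
      (-δ i * v t i + (1 - v t i) * ∑ j, B i j * v t j) t)
    (hv0 : ∀ i, v 0 i ∈ Set.Icc (0 : ℝ) 1)
    (hinit : ∀ i, vlb 0 (c i) ≤ v 0 i ∧ v 0 i ≤ vub 0 (c i)) :
    ∀ t : ℝ, 0 ≤ t → ∀ i, vlb t (c i) ≤ v t i ∧ v t i ≤ vub t (c i) := by
  have hδ : ∀ i, 0 ≤ δ i := fun i => (hδ_pos i).le
  have hcell : ∀ i l, 0 ≤ ∑ k ∈ univ.filter (fun k => c k = l), B i k :=
    fun i _ => sum_nonneg fun k _ => hB_nonneg i k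
  have hv := nimfa_mem_Icc hδ hB_nonneg hsol hv0
  have hlb := nimfa_mem_Icc (B := dmin)
    (fun l => by obtain ⟨i, -, hi⟩ := (hδmax l).1; exact hi ▸ hδ i)
    (fun p l => by obtain ⟨i, -, hi⟩ := (hdmin p l).1; exact hi ▸ hcell i l) hvlb hvlb0
  have hub := nimfa_mem_Icc (B := dmax)
    (fun l => by obtain ⟨i, -, hi⟩ := (hδmin l).1; exact hi ▸ hδ i)
    (fun p l => by obtain ⟨i, -, hi⟩ := (hdmax p l).1; exact hi ▸ hcell i l) hvub hvub0
  intro t ht i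
  exact ⟨nimfa_comp_le_nimfa hδ hB_nonneg (fun i => (hδmax (c i)).2 ⟨i, rfl, rfl⟩)
      (fun i l => (hdmin (c i) l).2 ⟨i, rfl, rfl⟩) hsol hvlb (fun t ht i => (hv t ht i).2) hlb
      (fun i => (hinit i).1) t ht i,
    nimfa_le_nimfa_comp hδ hB_nonneg (fun i => (hδmin (c i)).2 ⟨i, rfl, rfl⟩)
      (fun i l => (hdmax (c i) l).2 ⟨i, rfl, rfl⟩) hsol hvub hub (fun i => (hinit i).2) t ht i⟩

/-- **Theorem 6, reduced-size bounds for an arbitrary partition.**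
For any (not necessarily equitable) partition of the nodes into `r` cells encoded by
`c : Fin N → Fin r`, the `N`-dimensional NIMFA viral state is bounded cellwise, at every time
`t ≥ 0`, by the `r`-dimensional lower and upper bound dynamics built from the extremal cell
degrees `d_min`, `d_max` and extremal curing rates `δ_min`, `δ_max`, provided the bounds hold
at time `0`. -/
theorem nimfa_bounds_by_equitable
    {N r : ℕ} (B : Matrix (Fin N) (Fin N) ℝ) (δ : Fin N → ℝ)
    (hδ_pos : ∀ i, 0 < δ i)
    (hB_nonneg : ∀ i j, 0 ≤ B i j)
    (hB_symm : B.IsSymm)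
    (hB_irr : MatIrreducible B)
    (c : Fin N → Fin r) (hsurj : Function.Surjective c)
    (dmin dmax : Fin r → Fin r → ℝ)
    (hdmin : ∀ p l, IsLeast
      {x : ℝ | ∃ i, c i = p ∧ x = ∑ k ∈ univ.filter (fun k => c k = l), B i k} (dmin p l))
    (hdmax : ∀ p l, IsGreatest
      {x : ℝ | ∃ i, c i = p ∧ x = ∑ k ∈ univ.filter (fun k => c k = l), B i k} (dmax p l))
    (δmin δmax : Fin r → ℝ)
    (hδmin : ∀ l, IsLeast {x : ℝ | ∃ i, c i = l ∧ x = δ i} (δmin l))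
    (hδmax : ∀ l, IsGreatest {x : ℝ | ∃ i, c i = l ∧ x = δ i} (δmax l))
    (vlb vub : ℝ → Fin r → ℝ)
    (hvlb : ∀ t : ℝ, 0 ≤ t → ∀ p : Fin r, HasDerivAt (fun s => vlb s p)
      (-δmax p * vlb t p + (1 - vlb t p) * ∑ l : Fin r, dmin p l * vlb t l) t)
    (hvub : ∀ t : ℝ, 0 ≤ t → ∀ p : Fin r, HasDerivAt (fun s => vub s p)
      (-δmin p * vub t p + (1 - vub t p) * ∑ l : Fin r, dmax p l * vub t l) t)
    (hvlb0 : ∀ p, vlb 0 p ∈ Set.Icc (0 : ℝ) 1)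
    (hvub0 : ∀ p, vub 0 p ∈ Set.Icc (0 : ℝ) 1)
    (v : ℝ → Fin N → ℝ)
    (hsol : ∀ t : ℝ, 0 ≤ t → ∀ i, HasDerivAt (fun s => v s i)
      (-δ i * v t i + (1 - v t i) * ∑ j, B i j * v t j) t)
    (hv0 : ∀ i, v 0 i ∈ Set.Icc (0 : ℝ) 1)
    (hinit : ∀ i, vlb 0 (c i) ≤ v 0 i ∧ v 0 i ≤ vub 0 (c i)) :
    ∀ t : ℝ, 0 ≤ t → ∀ i, vlb t (c i) ≤ v t i ∧ v t i ≤ vub t (c i) :=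
  nimfa_bounds_by_equitable_general B δ hδ_pos hB_nonneg c dmin dmax hdmin hdmax δmin δmax hδmin
    hδmax vlb vub hvlb hvub hvlb0 hvub0 v hsol hv0 hinit
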